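/- arXiv:2002.00879 — 2 statements merged into one kernel-verified Lean document; each statement's English description precedes it below -/
import Mathlib

section
/- For the 2×2 real symmetric matrix A = [[0,1],[1,0]] (viewed as a complex Hermitian matrix), γ₀(A) = 4. Since ‖A‖₁,₁ = 2, this shows that the Lipschitz constant 2 in the inequality |γ₀(A) − γ₀(B)| ≤ 2‖A − B‖₁,₁ is attained. -/
open Matrix ComplexOrder

/-- The ℓ¹ norm of a vector in ℂⁿ. -/
noncomputable def l1n {n : ℕ} (x : Fin n → ℂ) : ℝ := ∑ i, ‖x i‖

/-- The entrywise ℓ¹ norm ‖A‖₁,₁ of a matrix. -/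
noncomputable def norm11 {n : ℕ} (A : Matrix (Fin n) (Fin n) ℂ) : ℝ :=
  ∑ i, ∑ j, ‖A i j‖

/-- The Frobenius norm of a matrix. -/
noncomputable def frobNorm {n : ℕ} (A : Matrix (Fin n) (Fin n) ℂ) : ℝ :=
  Real.sqrt (∑ i, ∑ j, ‖A i j‖ ^ 2)

/-- γ₊(A): infimum of Σ ‖g_k‖₁² over finite decompositions A = Σ g_k g_k*. -/
noncomputable def gammaPlus {n : ℕ} (A : Matrix (Fin n) (Fin n) ℂ) : ℝ :=
  sInf {r : ℝ | ∃ (m : ℕ) (g : Fin m → Fin n → ℂ),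
    A = ∑ k, vecMulVec (g k) (star (g k)) ∧ r = ∑ k, (l1n (g k)) ^ 2}

/-- γ(A): infimum of Σ ‖g_k‖₁‖h_k‖₁ over finite decompositions A = Σ g_k h_k*. -/
noncomputable def gammaCross {n : ℕ} (A : Matrix (Fin n) (Fin n) ℂ) : ℝ :=
  sInf {r : ℝ | ∃ (m : ℕ) (g h : Fin m → Fin n → ℂ),
    A = ∑ k, vecMulVec (g k) (star (h k)) ∧ r = ∑ k, l1n (g k) * l1n (h k)}

/-- γ₀(A): infimum of γ₊(B) + γ₊(C) over decompositions A = B - C with B, C PSD. -/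
noncomputable def gammaZero {n : ℕ} (A : Matrix (Fin n) (Fin n) ℂ) : ℝ :=
  sInf {r : ℝ | ∃ B C : Matrix (Fin n) (Fin n) ℂ, B.PosSemidef ∧ C.PosSemidef ∧
    A = B - C ∧ r = gammaPlus B + gammaPlus C}

/-!
Off the diagonal, a decomposition `B = ∑ₖ gₖ gₖ*` gives `|B i j| ≤ ∑ₖ |gₖ i| |gₖ j|`, and by AM-GM
`4 |gₖ i| |gₖ j| ≤ (|gₖ i| + |gₖ j|)² ≤ ‖gₖ‖₁²`; hence `4 |B i j| ≤ γ₊(B)` for PSD `B`. For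
`A = B - C` this yields `γ₊(B) + γ₊(C) ≥ 4 |A 0 1| = 4`. The value `4` is attained by
`B = ½ [[1, 1], [1, 1]]` and `C = ½ [[1, -1], [-1, 1]]`, each the sum of two copies of
`g g*` with `g = (½, ±½)`, of `ℓ¹` norm `1`.
-/

lemma norm_add_norm_le_l1n {n : ℕ} (x : Fin n → ℂ) {i j : Fin n} (hij : i ≠ j) :
    ‖x i‖ + ‖x j‖ ≤ l1n x := by
  rw [← Finset.sum_pair (f := fun k => ‖x k‖) hij]
  exact Finset.sum_le_sum_of_subset_of_nonneg (Finset.subset_univ _)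
    fun _ _ _ => norm_nonneg _

lemma four_mul_norm_mul_norm_le_l1n_sq {n : ℕ} (x : Fin n → ℂ) {i j : Fin n} (hij : i ≠ j) :
    4 * (‖x i‖ * ‖x j‖) ≤ l1n x ^ 2 :=
  calc 4 * (‖x i‖ * ‖x j‖) ≤ (‖x i‖ + ‖x j‖) ^ 2 := by
        nlinarith [sq_nonneg (‖x i‖ - ‖x j‖)]
    _ ≤ l1n x ^ 2 := by
        gcongr
        exact norm_add_norm_le_l1n x hij

lemma four_mul_norm_sum_vecMulVec_apply_le {n m : ℕ} (g : Fin m → Fin n → ℂ)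
    {i j : Fin n} (hij : i ≠ j) :
    4 * ‖(∑ k, vecMulVec (g k) (star (g k))) i j‖ ≤ ∑ k, l1n (g k) ^ 2 :=
  calc 4 * ‖(∑ k, vecMulVec (g k) (star (g k))) i j‖
      = 4 * ‖∑ k, g k i * star (g k j)‖ := by
        simp only [Matrix.sum_apply, vecMulVec_apply, Pi.star_apply]
    _ ≤ 4 * ∑ k, ‖g k i‖ * ‖g k j‖ := by
        gcongr
        refine (norm_sum_le _ _).trans_eq (Finset.sum_congr rfl fun k _ => ?_)
        rw [norm_mul, norm_star]
    _ ≤ ∑ k, l1n (g k) ^ 2 := by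
        rw [Finset.mul_sum]
        exact Finset.sum_le_sum fun k _ => four_mul_norm_mul_norm_le_l1n_sq (g k) hij

lemma gammaPlus_nonneg {n : ℕ} (B : Matrix (Fin n) (Fin n) ℂ) : 0 ≤ gammaPlus B :=
  Real.sInf_nonneg fun _ ⟨_, _, _, hr⟩ => hr ▸ by positivity

lemma gammaPlus_sum_vecMulVec_le {n m : ℕ} (g : Fin m → Fin n → ℂ) :
    gammaPlus (∑ k, vecMulVec (g k) (star (g k))) ≤ ∑ k, l1n (g k) ^ 2 :=
  csInf_le ⟨0, fun _ ⟨_, _, _, hr⟩ => hr ▸ by positivity⟩ ⟨m, g, rfl, rfl⟩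

lemma four_mul_norm_apply_le_gammaPlus {n : ℕ} {B : Matrix (Fin n) (Fin n) ℂ}
    (hB : B.PosSemidef) {i j : Fin n} (hij : i ≠ j) :
    4 * ‖B i j‖ ≤ gammaPlus B := by
  obtain ⟨m, g, rfl⟩ := posSemidef_iff_eq_sum_vecMulVec.mp hB
  refine le_csInf ⟨_, m, g, rfl, rfl⟩ ?_
  rintro r ⟨m', g', hg', rfl⟩
  rw [hg']
  exact four_mul_norm_sum_vecMulVec_apply_le g' hij

lemma four_mul_norm_sub_apply_le_gammaPlus_add {n : ℕ} {B C : Matrix (Fin n) (Fin n) ℂ}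
    (hB : B.PosSemidef) (hC : C.PosSemidef) {i j : Fin n} (hij : i ≠ j) :
    4 * ‖(B - C) i j‖ ≤ gammaPlus B + gammaPlus C :=
  calc 4 * ‖(B - C) i j‖ ≤ 4 * ‖B i j‖ + 4 * ‖C i j‖ := by
        rw [Matrix.sub_apply]
        linarith [norm_sub_le (B i j) (C i j)]
    _ ≤ gammaPlus B + gammaPlus C :=
        add_le_add (four_mul_norm_apply_le_gammaPlus hB hij)
          (four_mul_norm_apply_le_gammaPlus hC hij)

lemma gammaZero_le_gammaPlus_add {n : ℕ} {B C : Matrix (Fin n) (Fin n) ℂ}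
    (hB : B.PosSemidef) (hC : C.PosSemidef) :
    gammaZero (B - C) ≤ gammaPlus B + gammaPlus C :=
  csInf_le ⟨0, fun _ ⟨B', C', _, _, _, hr⟩ => hr ▸ add_nonneg (gammaPlus_nonneg B')
    (gammaPlus_nonneg C')⟩ ⟨B, C, hB, hC, rfl, rfl⟩

lemma four_mul_norm_apply_le_gammaZero {n : ℕ} {A : Matrix (Fin n) (Fin n) ℂ}
    (hA : ∃ B C : Matrix (Fin n) (Fin n) ℂ, B.PosSemidef ∧ C.PosSemidef ∧ A = B - C)
    {i j : Fin n} (hij : i ≠ j) :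
    4 * ‖A i j‖ ≤ gammaZero A := by
  obtain ⟨B, C, hB, hC, rfl⟩ := hA
  refine le_csInf ⟨_, B, C, hB, hC, rfl, rfl⟩ ?_
  rintro r ⟨B', C', hB', hC', hBC, rfl⟩
  rw [hBC]
  exact four_mul_norm_sub_apply_le_gammaPlus_add hB' hC' hij

lemma sum_vecMulVec_posSemidef {n m : ℕ} (g : Fin m → Fin n → ℂ) :
    (∑ k, vecMulVec (g k) (star (g k))).PosSemidef :=
  posSemidef_iff_eq_sum_vecMulVec.mpr ⟨m, g, rfl⟩

theorem stmt7 :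
    gammaZero (!![(0 : ℂ), 1; 1, 0]) = 4 ∧ norm11 (!![(0 : ℂ), 1; 1, 0]) = 2 := by
  set g : Fin 2 → Fin 2 → ℂ := fun _ => ![1 / 2, 1 / 2]
  set h : Fin 2 → Fin 2 → ℂ := fun _ => ![1 / 2, -(1 / 2)]
  have hA : !![(0 : ℂ), 1; 1, 0] = ∑ k, vecMulVec (g k) (star (g k)) -
      ∑ k, vecMulVec (h k) (star (h k)) := by
    rw [Fin.sum_univ_two, Fin.sum_univ_two]
    ext i j
    simp only [Matrix.sub_apply, Matrix.add_apply, vecMulVec_apply, Pi.star_apply, g, h]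
    fin_cases i <;> fin_cases j <;> norm_num
  have hg : ∑ k, l1n (g k) ^ 2 = 2 := by norm_num [g, l1n, Fin.sum_univ_two]
  have hh : ∑ k, l1n (h k) ^ 2 = 2 := by norm_num [h, l1n, Fin.sum_univ_two]
  refine ⟨le_antisymm ?_ ?_, by norm_num [norm11, Fin.sum_univ_two]⟩
  · calc gammaZero !![(0 : ℂ), 1; 1, 0]
        ≤ gammaPlus (∑ k, vecMulVec (g k) (star (g k))) +
            gammaPlus (∑ k, vecMulVec (h k) (star (h k))) :=
          hA ▸ gammaZero_le_gammaPlus_add (sum_vecMulVec_posSemidef g)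
            (sum_vecMulVec_posSemidef h)
      _ ≤ 2 + 2 := add_le_add (hg ▸ gammaPlus_sum_vecMulVec_le g)
            (hh ▸ gammaPlus_sum_vecMulVec_le h)
      _ = 4 := by norm_num
  · simpa using four_mul_norm_apply_le_gammaZero
      ⟨_, _, sum_vecMulVec_posSemidef g, sum_vecMulVec_posSemidef h, hA⟩ (i := 0) (j := 1)
      (by decide)
end

section
/- Let n ≥ 1 and let A be an n×n complex positive semidefinite Hermitian matrix that is diagonally dominant, i.e., A_{ii} ≥ Σ_{j ≠ i} |A_{ij}| for every i. Then γ₊(A) = γ₀(A) = γ(A) = ‖A‖₁,₁. -/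
open Matrix ComplexOrder

/-!
For every decomposition `A = ∑ₖ gₖ hₖ*` the triangle inequality and `‖g h*‖₁,₁ = ‖g‖₁ ‖h‖₁` give
`‖A‖₁,₁ ≤ ∑ₖ ‖gₖ‖₁ ‖hₖ‖₁`, so `‖A‖₁,₁` bounds γ and γ₊ from below, and γ₀ too because
`‖B - C‖₁,₁ ≤ ‖B‖₁,₁ + ‖C‖₁,₁`; moreover `γ₀(A) ≤ γ₊(A)` via `A = A - 0`.

Diagonal dominance yields a decomposition attaining the bound. With the slacks
`sᵢ = Aᵢᵢ - ∑_{j ≠ i} |Aᵢⱼ| ≥ 0` and the phases `uᵢⱼ` of the entries `Aᵢⱼ`,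
`A = ∑ᵢ sᵢ eᵢ eᵢ* + ∑_{i ≠ j} vᵢⱼ vᵢⱼ*` where `vᵢⱼ = √(|Aᵢⱼ| / 2) (eᵢ + ūᵢⱼ eⱼ)`,
and its cost is `∑ᵢ sᵢ + ∑_{i ≠ j} ‖vᵢⱼ‖₁² = ∑ᵢ sᵢ + 2 ∑_{i ≠ j} |Aᵢⱼ| = ‖A‖₁,₁`.
-/

open Complex

lemma vecMulVec_single_star_single {m R : Type*} [DecidableEq m] [Semiring R] [StarRing R]
    (i j : m) (c d : R) :
    vecMulVec (Pi.single i c) (star (Pi.single j d)) = single i j (c * star d) := by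
  ext r s
  simp only [vecMulVec_apply, Pi.star_apply, single_apply, Pi.single_apply]
  split_ifs <;> simp_all

lemma vecMulVec_single_add_single {m R : Type*} [DecidableEq m] [Semiring R] [StarRing R]
    (i j : m) (c d : R) :
    vecMulVec (Pi.single i c + Pi.single j d) (star (Pi.single i c + Pi.single j d)) =
      single i i (c * star c) + single i j (c * star d) + single j i (d * star c) +
        single j j (d * star d) := by
  simp only [star_add, add_vecMulVec, vecMulVec_add, vecMulVec_single_star_single]
  abel

variable {n : ℕ}

lemma l1n_nonneg (x : Fin n → ℂ) : 0 ≤ l1n x :=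
  Finset.sum_nonneg fun _ _ => norm_nonneg _

lemma l1n_single (i : Fin n) (c : ℂ) : l1n (Pi.single i c) = ‖c‖ := by
  rw [l1n, Fintype.sum_eq_single i fun j hj => by rw [Pi.single_eq_of_ne hj, norm_zero],
    Pi.single_eq_same]

lemma l1n_single_add_single {i j : Fin n} (hij : i ≠ j) (c d : ℂ) :
    l1n (Pi.single i c + Pi.single j d) = ‖c‖ + ‖d‖ := by
  rw [l1n, Fintype.sum_eq_add i j hij fun k hk => by
    simp [Pi.single_eq_of_ne hk.1, Pi.single_eq_of_ne hk.2]]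
  simp [Pi.single_eq_of_ne hij, Pi.single_eq_of_ne hij.symm]

lemma norm11_sub_le (B C : Matrix (Fin n) (Fin n) ℂ) :
    norm11 (B - C) ≤ norm11 B + norm11 C := by
  simp only [norm11, ← Finset.sum_add_distrib]
  gcongr with i _ j _
  exact norm_sub_le _ _

lemma norm11_sum_le {ι : Type*} (s : Finset ι) (B : ι → Matrix (Fin n) (Fin n) ℂ) :
    norm11 (∑ k ∈ s, B k) ≤ ∑ k ∈ s, norm11 (B k) := by
  simp only [norm11, Matrix.sum_apply]
  calc ∑ i, ∑ j, ‖∑ k ∈ s, B k i j‖ ≤ ∑ i, ∑ j, ∑ k ∈ s, ‖B k i j‖ := by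
        gcongr; exact norm_sum_le _ _
    _ = ∑ k ∈ s, ∑ i, ∑ j, ‖B k i j‖ := by
        simp only [Finset.sum_comm (s := s)]

lemma norm11_vecMulVec_star (x y : Fin n → ℂ) :
    norm11 (vecMulVec x (star y)) = l1n x * l1n y := by
  simp [norm11, l1n, vecMulVec_apply, Finset.sum_mul_sum]

lemma norm11_le_of_eq_sum_vecMulVec {ι : Type*} [Fintype ι] {A : Matrix (Fin n) (Fin n) ℂ}
    (g h : ι → Fin n → ℂ) (hA : A = ∑ k, vecMulVec (g k) (star (h k))) :
    norm11 A ≤ ∑ k, l1n (g k) * l1n (h k) := by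
  subst hA
  simpa only [norm11_vecMulVec_star] using
    norm11_sum_le Finset.univ fun k => vecMulVec (g k) (star (h k))

lemma norm11_le_gammaCross (A : Matrix (Fin n) (Fin n) ℂ) : norm11 A ≤ gammaCross A := by
  have hrows : A = ∑ i, vecMulVec (Pi.single i 1) (star (star (A i))) := by
    ext r s
    simp [Matrix.sum_apply, vecMulVec_apply, Pi.single_apply]
  refine le_csInf ⟨_, n, _, _, hrows, rfl⟩ ?_
  rintro r ⟨m, g, h, hgh, rfl⟩
  exact norm11_le_of_eq_sum_vecMulVec g h hgh

lemma gammaCross_le_of_eq_sum_vecMulVec {ι : Type*} [Fintype ι] {A : Matrix (Fin n) (Fin n) ℂ}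
    (g h : ι → Fin n → ℂ) (hA : A = ∑ k, vecMulVec (g k) (star (h k))) :
    gammaCross A ≤ ∑ k, l1n (g k) * l1n (h k) := by
  let e := Fintype.equivFin ι
  refine csInf_le ⟨0, ?_⟩
    ⟨_, g ∘ e.symm, h ∘ e.symm, ?_, (e.symm.sum_comp fun k => l1n (g k) * l1n (h k)).symm⟩
  · rintro r ⟨m, g, h, -, rfl⟩
    exact Finset.sum_nonneg fun k _ => mul_nonneg (l1n_nonneg _) (l1n_nonneg _)
  · rw [hA]
    exact (e.symm.sum_comp _).symm

lemma norm11_le_gammaPlus {B : Matrix (Fin n) (Fin n) ℂ} (hB : B.PosSemidef) :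
    norm11 B ≤ gammaPlus B := by
  obtain ⟨m, g, hg⟩ := Matrix.posSemidef_iff_eq_sum_vecMulVec.mp hB
  refine le_csInf ⟨_, m, g, hg, rfl⟩ ?_
  rintro r ⟨m, g, hg, rfl⟩
  simpa only [sq] using norm11_le_of_eq_sum_vecMulVec g g hg

lemma gammaPlus_le_of_eq_sum_vecMulVec {ι : Type*} [Fintype ι] {A : Matrix (Fin n) (Fin n) ℂ}
    (g : ι → Fin n → ℂ) (hA : A = ∑ k, vecMulVec (g k) (star (g k))) :
    gammaPlus A ≤ ∑ k, l1n (g k) ^ 2 := by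
  let e := Fintype.equivFin ι
  refine csInf_le ⟨0, ?_⟩ ⟨_, g ∘ e.symm, ?_, (e.symm.sum_comp fun k => l1n (g k) ^ 2).symm⟩
  · rintro r ⟨m, g, -, rfl⟩
    positivity
  · rw [hA]
    exact (e.symm.sum_comp _).symm

lemma gammaPlus_zero : gammaPlus (0 : Matrix (Fin n) (Fin n) ℂ) = 0 := by
  refine le_antisymm ?_ ?_
  · simpa using gammaPlus_le_of_eq_sum_vecMulVec (n := n) (Fin.elim0 : Fin 0 → Fin n → ℂ) (by simp)
  · simpa [norm11] using norm11_le_gammaPlus (PosSemidef.zero (n := Fin n) (R := ℂ))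

lemma norm11_sub_le_gammaPlus_add {B C : Matrix (Fin n) (Fin n) ℂ} (hB : B.PosSemidef)
    (hC : C.PosSemidef) : norm11 (B - C) ≤ gammaPlus B + gammaPlus C :=
  (norm11_sub_le B C).trans (add_le_add (norm11_le_gammaPlus hB) (norm11_le_gammaPlus hC))

lemma norm11_le_gammaZero {A : Matrix (Fin n) (Fin n) ℂ} (hA : A.PosSemidef) :
    norm11 A ≤ gammaZero A := by
  refine le_csInf ⟨_, A, 0, hA, .zero, (sub_zero A).symm, rfl⟩ ?_
  rintro r ⟨B, C, hB, hC, rfl, rfl⟩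
  exact norm11_sub_le_gammaPlus_add hB hC

lemma gammaZero_le_gammaPlus {A : Matrix (Fin n) (Fin n) ℂ} (hA : A.PosSemidef) :
    gammaZero A ≤ gammaPlus A := by
  refine csInf_le ⟨norm11 A, ?_⟩
    ⟨A, 0, hA, .zero, (sub_zero A).symm, by rw [gammaPlus_zero, add_zero]⟩
  rintro r ⟨B, C, hB, hC, rfl, rfl⟩
  exact norm11_sub_le_gammaPlus_add hB hC

def IsDiagDominant (A : Matrix (Fin n) (Fin n) ℂ) : Prop :=
  ∀ i, ∑ j ∈ Finset.univ.erase i, ‖A i j‖ ≤ (A i i).re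

noncomputable def ddSlack (A : Matrix (Fin n) (Fin n) ℂ) (i : Fin n) : ℝ :=
  (A i i).re - ∑ j ∈ Finset.univ.erase i, ‖A i j‖

lemma IsDiagDominant.ddSlack_nonneg {A : Matrix (Fin n) (Fin n) ℂ} (hdd : IsDiagDominant A)
    (i : Fin n) : 0 ≤ ddSlack A i :=
  sub_nonneg.2 (hdd i)

noncomputable def ddTerm (A : Matrix (Fin n) (Fin n) ℂ) (p : Fin n × Fin n) :
    Matrix (Fin n) (Fin n) ℂ :=
  if p.1 = p.2 then single p.1 p.1 (ddSlack A p.1 : ℂ)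
  else single p.1 p.1 (‖A p.1 p.2‖ : ℂ) + single p.1 p.2 (A p.1 p.2)

lemma ddTerm_self (A : Matrix (Fin n) (Fin n) ℂ) (i : Fin n) :
    ddTerm A (i, i) = single i i (ddSlack A i : ℂ) := if_pos rfl

lemma ddTerm_of_ne (A : Matrix (Fin n) (Fin n) ℂ) {i j : Fin n} (hij : i ≠ j) :
    ddTerm A (i, j) = single i i (‖A i j‖ : ℂ) + single i j (A i j) := if_neg hij

lemma sum_ddTerm_row {A : Matrix (Fin n) (Fin n) ℂ} (hA : A.IsHermitian) (i : Fin n) :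
    ∑ j, ddTerm A (i, j) = ∑ j, single i j (A i j) := by
  have hdiag : (ddSlack A i : ℂ) + ∑ j ∈ Finset.univ.erase i, (‖A i j‖ : ℂ) = A i i := by
    rw [ddSlack, ← ofReal_sum, ← ofReal_add, sub_add_cancel]
    exact hA.coe_re_apply_self i
  rw [← Finset.add_sum_erase _ _ (Finset.mem_univ i),
    ← Finset.add_sum_erase _ _ (Finset.mem_univ i),
    Finset.sum_congr rfl fun j hj => ddTerm_of_ne A (Finset.ne_of_mem_erase hj).symm, ddTerm_self,
    Finset.sum_add_distrib, ← add_assoc, ← hdiag, single_add]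
  congr 2
  exact (map_sum (singleAddMonoidHom (α := ℂ) i i) _ _).symm

lemma sum_ddTerm {A : Matrix (Fin n) (Fin n) ℂ} (hA : A.IsHermitian) : ∑ p, ddTerm A p = A := by
  simp only [Fintype.sum_prod_type, sum_ddTerm_row hA]
  exact (matrix_eq_sum_single A).symm

noncomputable def ddVec (A : Matrix (Fin n) (Fin n) ℂ) (p : Fin n × Fin n) : Fin n → ℂ :=
  if p.1 = p.2 then Pi.single p.1 (√(ddSlack A p.1) : ℂ)
  else Pi.single p.1 (√(‖A p.1 p.2‖ / 2) : ℂ) +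
    Pi.single p.2 ((√(‖A p.1 p.2‖ / 2) : ℂ) * star (cexp (arg (A p.1 p.2) * I)))

lemma ddVec_self (A : Matrix (Fin n) (Fin n) ℂ) (i : Fin n) :
    ddVec A (i, i) = Pi.single i (√(ddSlack A i) : ℂ) := if_pos rfl

lemma ddVec_of_ne (A : Matrix (Fin n) (Fin n) ℂ) {i j : Fin n} (hij : i ≠ j) :
    ddVec A (i, j) = Pi.single i (√(‖A i j‖ / 2) : ℂ) +
      Pi.single j ((√(‖A i j‖ / 2) : ℂ) * star (cexp (arg (A i j) * I))) := if_neg hij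

lemma vecMulVec_ddVec_self {A : Matrix (Fin n) (Fin n) ℂ} (hdd : IsDiagDominant A) (i : Fin n) :
    vecMulVec (ddVec A (i, i)) (star (ddVec A (i, i))) = ddTerm A (i, i) := by
  rw [ddVec_self, vecMulVec_single_star_single, ddTerm_self, RCLike.star_def, conj_ofReal,
    ← ofReal_mul, Real.mul_self_sqrt (hdd.ddSlack_nonneg i)]

lemma vecMulVec_ddVec_of_ne {A : Matrix (Fin n) (Fin n) ℂ} (hA : A.IsHermitian) {i j : Fin n}
    (hij : i ≠ j) :
    vecMulVec (ddVec A (i, j)) (star (ddVec A (i, j))) =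
      (2⁻¹ : ℂ) • (ddTerm A (i, j) + ddTerm A (j, i)) := by
  rw [ddVec_of_ne A hij, vecMulVec_single_add_single, ddTerm_of_ne A hij,
    ddTerm_of_ne A hij.symm, (hA.apply j i).symm, norm_star]
  set c : ℂ := ((√(‖A i j‖ / 2) : ℝ) : ℂ)
  set u := cexp (arg (A i j) * I)
  have hu : star u * u = 1 := by
    rw [RCLike.star_def, ← normSq_eq_conj_mul_self, normSq_eq_norm_sq, norm_exp_ofReal_mul_I]
    norm_num
  have hau : (‖A i j‖ : ℂ) * u = A i j := norm_mul_exp_arg_mul_I _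
  have hc : c * star c = 2⁻¹ * ‖A i j‖ := by
    rw [RCLike.star_def, conj_ofReal, ← ofReal_mul, Real.mul_self_sqrt (by positivity)]
    push_cast
    ring
  have hij_entry : c * star (c * star u) = 2⁻¹ * A i j := by
    rw [star_mul', star_star, ← hau]
    linear_combination u * hc
  have hji_entry : c * star u * star c = 2⁻¹ * star (A i j) := by
    rw [← hau, star_mul', show star (‖A i j‖ : ℂ) = ‖A i j‖ from conj_ofReal _]
    linear_combination star u * hc
  have hjj_entry : c * star u * star (c * star u) = 2⁻¹ * ‖A i j‖ := by
    rw [star_mul', star_star]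
    linear_combination (star u * u) * hc + 2⁻¹ * ‖A i j‖ * hu
  rw [hc, hij_entry, hji_entry, hjj_entry]
  simp only [smul_add, smul_single, smul_eq_mul]
  abel

lemma vecMulVec_ddVec {A : Matrix (Fin n) (Fin n) ℂ} (hA : A.IsHermitian)
    (hdd : IsDiagDominant A) (p : Fin n × Fin n) :
    vecMulVec (ddVec A p) (star (ddVec A p)) = (2⁻¹ : ℂ) • (ddTerm A p + ddTerm A p.swap) := by
  obtain ⟨i, j⟩ := p
  rcases eq_or_ne i j with rfl | hij
  · rw [vecMulVec_ddVec_self hdd, Prod.swap_prod_mk]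
    module
  · exact vecMulVec_ddVec_of_ne hA hij

lemma sum_vecMulVec_ddVec {A : Matrix (Fin n) (Fin n) ℂ} (hA : A.IsHermitian)
    (hdd : IsDiagDominant A) : ∑ p, vecMulVec (ddVec A p) (star (ddVec A p)) = A := by
  have hswap : ∑ p : Fin n × Fin n, ddTerm A p.swap = ∑ p, ddTerm A p :=
    (Equiv.prodComm (Fin n) (Fin n)).sum_comp (ddTerm A)
  simp only [vecMulVec_ddVec hA hdd, ← Finset.smul_sum, Finset.sum_add_distrib, hswap,
    sum_ddTerm hA]
  module

lemma sq_l1n_ddVec_self {A : Matrix (Fin n) (Fin n) ℂ} (hdd : IsDiagDominant A) (i : Fin n) :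
    l1n (ddVec A (i, i)) ^ 2 = ddSlack A i := by
  rw [ddVec_self, l1n_single, norm_real, Real.norm_of_nonneg (Real.sqrt_nonneg _),
    Real.sq_sqrt (hdd.ddSlack_nonneg i)]

lemma sq_l1n_ddVec_of_ne (A : Matrix (Fin n) (Fin n) ℂ) {i j : Fin n} (hij : i ≠ j) :
    l1n (ddVec A (i, j)) ^ 2 = 2 * ‖A i j‖ := by
  rw [ddVec_of_ne A hij, l1n_single_add_single hij, norm_mul, norm_star, norm_exp_ofReal_mul_I,
    mul_one, norm_real, Real.norm_of_nonneg (Real.sqrt_nonneg _), ← two_mul, mul_pow,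
    Real.sq_sqrt (by positivity)]
  ring

lemma sum_sq_l1n_ddVec_row {A : Matrix (Fin n) (Fin n) ℂ} (hA : A.IsHermitian)
    (hdd : IsDiagDominant A) (i : Fin n) :
    ∑ j, l1n (ddVec A (i, j)) ^ 2 = ∑ j, ‖A i j‖ := by
  have hii : ‖A i i‖ = (A i i).re := by
    nth_rw 1 [← hA.coe_re_apply_self i]
    rw [RCLike.norm_ofReal]
    exact abs_of_nonneg ((Finset.sum_nonneg fun _ _ => norm_nonneg _).trans (hdd i))
  rw [← Finset.add_sum_erase _ _ (Finset.mem_univ i),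
    ← Finset.add_sum_erase _ _ (Finset.mem_univ i),
    Finset.sum_congr rfl fun j hj => sq_l1n_ddVec_of_ne A (Finset.ne_of_mem_erase hj).symm,
    sq_l1n_ddVec_self hdd, hii, ddSlack, ← Finset.mul_sum]
  ring

lemma sum_sq_l1n_ddVec {A : Matrix (Fin n) (Fin n) ℂ} (hA : A.IsHermitian)
    (hdd : IsDiagDominant A) : ∑ p, l1n (ddVec A p) ^ 2 = norm11 A := by
  simp only [Fintype.sum_prod_type, sum_sq_l1n_ddVec_row hA hdd, norm11]

theorem stmt16_general (n : ℕ) (A : Matrix (Fin n) (Fin n) ℂ) (hA : A.PosSemidef)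
    (hdd : ∀ i, ∑ j ∈ Finset.univ.erase i, ‖A i j‖ ≤ (A i i).re) :
    gammaPlus A = norm11 A ∧ gammaZero A = norm11 A ∧ gammaCross A = norm11 A := by
  have hdecomp := (sum_vecMulVec_ddVec hA.1 hdd).symm
  have hcost := sum_sq_l1n_ddVec hA.1 hdd
  have hplus : gammaPlus A = norm11 A :=
    le_antisymm (hcost ▸ gammaPlus_le_of_eq_sum_vecMulVec _ hdecomp) (norm11_le_gammaPlus hA)
  refine ⟨hplus, le_antisymm (hplus ▸ gammaZero_le_gammaPlus hA) (norm11_le_gammaZero hA),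
    le_antisymm ?_ (norm11_le_gammaCross A)⟩
  simpa only [← sq, hcost] using gammaCross_le_of_eq_sum_vecMulVec _ _ hdecomp

theorem stmt16 (n : ℕ) (hn : 1 ≤ n) (A : Matrix (Fin n) (Fin n) ℂ) (hA : A.PosSemidef)
    (hdd : ∀ i, ∑ j ∈ Finset.univ.erase i, ‖A i j‖ ≤ (A i i).re) :
    gammaPlus A = norm11 A ∧ gammaZero A = norm11 A ∧ gammaCross A = norm11 A :=
  stmt16_general n A hA hdd
end
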